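/- arXiv:2412.00369 — 3 statements merged into one kernel-verified Lean document; each statement's English description precedes it below -/
import Mathlib

section
/- Foata's map is a bijection on the symmetric group S_n: writing a permutation in disjoint cycle notation with the smallest element of each cycle first, ordering cycles in decreasing order of their smallest elements, and erasing the parentheses, yields an injective (hence bijective) map from S_n to S_n. -/
/-!
The word `foataWord σ` contains every letter exactly once, so it is the one-line notation of a
permutation. It also determines `σ`. The minima heading the blocks decrease, so each block ends
just before the first later letter smaller than its head; hence the word splits uniquely into the
blocks `m, σ m, σ² m, …`, and each block determines `σ` on its cycle. An injective self-map of the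
finite set `S_n` is a bijection.
-/

open Classical in
/-- The minima of the cycles of `σ` (including fixed points), listed in decreasing order. -/
noncomputable def cycleMinsDesc {n : ℕ} (σ : Equiv.Perm (Fin n)) : List (Fin n) :=
  ((List.finRange n).filter fun x => decide (∀ y, σ.SameCycle x y → x ≤ y)).reverse

/-- The cycle of `σ` containing `m`, written starting at `m` (a fixed point yields `[m]`). -/
def cycleBlock {n : ℕ} (σ : Equiv.Perm (Fin n)) (m : Fin n) : List (Fin n) :=
  (List.range (max (σ.cycleOf m).support.card 1)).map fun i => (σ ^ i) m

/-- Foata's word: write `σ` in disjoint cycle notation with the smallest element of each cycle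
first, order the cycles in decreasing order of their smallest elements, and erase the
parentheses. -/
noncomputable def foataWord {n : ℕ} (σ : Equiv.Perm (Fin n)) : List (Fin n) :=
  (cycleMinsDesc σ).flatMap (cycleBlock σ)

namespace List

variable {α : Type*}

theorem head?_flatMap_of_forall_head?_eq {L : List α} {f : α → List α}
    (hf : ∀ m ∈ L, (f m).head? = some m) : (L.flatMap f).head? = L.head? := by
  cases L with
  | nil => rfl
  | cons m T => simp [flatMap_cons, head?_append, hf m (by simp)]

variable [LinearOrder α]

theorem takeWhile_flatMap_cons_of_head_min {m : α} {T : List α} {f : α → List α}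
    (hf : ∀ m' ∈ m :: T, (f m').head? = some m' ∧ ∀ x ∈ f m', m' ≤ x)
    (hT : ∀ m' ∈ T, m' < m) :
    ((m :: T).flatMap f).takeWhile (m ≤ ·) = f m := by
  have hrest : (T.flatMap f).takeWhile (m ≤ ·) = [] := by
    rcases hw : T.flatMap f with _ | ⟨a, t⟩
    · rfl
    · have ha : T.head? = some a := by
        rw [← head?_flatMap_of_forall_head?_eq fun x hx => (hf x (mem_cons_of_mem _ hx)).1, hw]
        rfl
      simp [hT a (mem_of_mem_head? ha)]
  rw [flatMap_cons, takeWhile_append_of_pos fun x hx => by simpa using (hf m (by simp)).2 x hx,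
    hrest, append_nil]

theorem eq_of_flatMap_eq_of_head_min {L L' : List α} {f g : α → List α}
    (hf : ∀ m ∈ L, (f m).head? = some m ∧ ∀ x ∈ f m, m ≤ x)
    (hg : ∀ m ∈ L', (g m).head? = some m ∧ ∀ x ∈ g m, m ≤ x)
    (hL : L.Pairwise (· > ·)) (hL' : L'.Pairwise (· > ·)) (h : L.flatMap f = L'.flatMap g) :
    L = L' ∧ ∀ m ∈ L, f m = g m := by
  induction L generalizing L' with
  | nil =>
    rcases L' with _ | ⟨m', T'⟩
    · simp
    · have hhead := head?_flatMap_of_forall_head?_eq fun x hx => (hg x hx).1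
      simp [← h] at hhead
  | cons m T ih =>
    have hhead : (m :: T).head? = L'.head? := by
      rw [← head?_flatMap_of_forall_head?_eq fun x hx => (hf x hx).1, h,
        head?_flatMap_of_forall_head?_eq fun x hx => (hg x hx).1]
    rcases L' with _ | ⟨m', T'⟩
    · simp at hhead
    obtain rfl : m = m' := by simpa using hhead
    have hblock : f m = g m := by
      rw [← takeWhile_flatMap_cons_of_head_min hf (fun x hx => rel_of_pairwise_cons hL hx), h,
        takeWhile_flatMap_cons_of_head_min hg (fun x hx => rel_of_pairwise_cons hL' hx)]
    rw [flatMap_cons, flatMap_cons, hblock] at h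
    obtain ⟨rfl, hT⟩ := ih (fun x hx => hf x (mem_cons_of_mem _ hx))
      (fun x hx => hg x (mem_cons_of_mem _ hx)) hL.of_cons hL'.of_cons (append_cancel_left h)
    exact ⟨rfl, forall_mem_cons.2 ⟨hblock, hT⟩⟩

end List

section CycleBlock

variable {n : ℕ} (σ : Equiv.Perm (Fin n)) (m : Fin n)

theorem length_cycleBlock : (cycleBlock σ m).length = max (σ.cycleOf m).support.card 1 := by
  simp [cycleBlock]

theorem getElem_cycleBlock {i : ℕ} (hi : i < (cycleBlock σ m).length) :
    (cycleBlock σ m)[i] = (σ ^ i) m := by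
  simp [cycleBlock]

theorem head?_cycleBlock : (cycleBlock σ m).head? = some m := by
  rw [List.head?_eq_getElem?, List.getElem?_eq_getElem (by simp [length_cycleBlock]),
    getElem_cycleBlock]
  rfl

theorem length_cycleBlock_of_apply_ne (hm : σ m ≠ m) :
    (cycleBlock σ m).length = (σ.cycleOf m).support.card := by
  have : 0 < (σ.cycleOf m).support.card := Finset.card_pos.2 ⟨m, by simpa using hm⟩
  rw [length_cycleBlock]; omega

theorem pow_mod_length_cycleBlock_apply (k : ℕ) :
    (σ ^ (k % (cycleBlock σ m).length)) m = (σ ^ k) m := by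
  by_cases hm : σ m = m
  · simp [Equiv.Perm.pow_apply_eq_self_of_apply_eq_self hm]
  · rw [length_cycleBlock_of_apply_ne σ m hm, Equiv.Perm.pow_mod_card_support_cycleOf_self_apply]

theorem nodup_cycleBlock : (cycleBlock σ m).Nodup := by
  by_cases hm : σ m = m
  · simp [cycleBlock, (σ.cycleOf_eq_one_iff).2 hm]
  · have hmem : m ∈ (σ.cycleOf m).support := by simpa using hm
    refine List.Nodup.map_on (fun i hi j hj hij => ?_) List.nodup_range
    rw [List.mem_range, ← length_cycleBlock, length_cycleBlock_of_apply_ne σ m hm] at hi hj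
    exact (((σ.isCycleOn_support_cycleOf m).pow_apply_eq_pow_apply hmem).1 hij).eq_of_lt_of_lt
      hi hj

theorem mem_cycleBlock {x : Fin n} : x ∈ cycleBlock σ m ↔ σ.SameCycle m x := by
  constructor
  · intro hx
    obtain ⟨i, -, rfl⟩ := List.mem_map.1 hx
    exact ⟨i, by simp⟩
  · intro hx
    obtain ⟨k, rfl⟩ := hx.exists_nat_pow_eq
    have hpos : 0 < (cycleBlock σ m).length := by simp [length_cycleBlock]
    rw [← pow_mod_length_cycleBlock_apply, ← getElem_cycleBlock _ _ (Nat.mod_lt _ hpos)]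
    exact List.getElem_mem _

theorem pow_apply_eq_of_cycleBlock_eq {σ τ : Equiv.Perm (Fin n)} {m : Fin n}
    (h : cycleBlock σ m = cycleBlock τ m) (k : ℕ) : (σ ^ k) m = (τ ^ k) m := by
  have hk : k % (cycleBlock σ m).length < (cycleBlock σ m).length :=
    Nat.mod_lt k (by simp [length_cycleBlock])
  calc (σ ^ k) m = (cycleBlock σ m)[k % (cycleBlock σ m).length] := by
        rw [getElem_cycleBlock, pow_mod_length_cycleBlock_apply]
    _ = (cycleBlock τ m)[k % (cycleBlock τ m).length]'(h ▸ hk) := by simp only [h]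
    _ = (τ ^ k) m := by rw [getElem_cycleBlock, pow_mod_length_cycleBlock_apply]

theorem apply_eq_of_cycleBlock_eq {σ τ : Equiv.Perm (Fin n)} {m x : Fin n}
    (h : cycleBlock σ m = cycleBlock τ m) (hx : σ.SameCycle m x) : σ x = τ x := by
  obtain ⟨k, rfl⟩ := hx.exists_nat_pow_eq
  rw [← Equiv.Perm.mul_apply, ← pow_succ', pow_apply_eq_of_cycleBlock_eq h,
    pow_apply_eq_of_cycleBlock_eq h, pow_succ', Equiv.Perm.mul_apply]

end CycleBlock

section FoataWord

variable {n : ℕ} (σ : Equiv.Perm (Fin n))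

theorem mem_cycleMinsDesc {m : Fin n} :
    m ∈ cycleMinsDesc σ ↔ ∀ y, σ.SameCycle m y → m ≤ y := by
  simp [cycleMinsDesc]

theorem pairwise_cycleMinsDesc : (cycleMinsDesc σ).Pairwise (· > ·) := by
  rw [cycleMinsDesc, List.pairwise_reverse]
  exact (List.pairwise_lt_finRange n).filter _

theorem exists_mem_cycleMinsDesc_sameCycle (x : Fin n) :
    ∃ m ∈ cycleMinsDesc σ, σ.SameCycle m x := by
  classical
  obtain ⟨m, hm, hmin⟩ := (Finset.univ.filter (σ.SameCycle x)).exists_min_image id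
    ⟨x, by simp [Equiv.Perm.SameCycle.refl]⟩
  simp only [Finset.mem_filter, Finset.mem_univ, true_and, id] at hm hmin
  exact ⟨m, (mem_cycleMinsDesc σ).2 fun y hy => hmin y (hm.trans hy), hm.symm⟩

theorem mem_foataWord (x : Fin n) : x ∈ foataWord σ := by
  obtain ⟨m, hm, hmx⟩ := exists_mem_cycleMinsDesc_sameCycle σ x
  exact List.mem_flatMap.2 ⟨m, hm, (mem_cycleBlock σ m).2 hmx⟩

theorem nodup_foataWord : (foataWord σ).Nodup := by
  refine List.nodup_flatMap.2 ⟨fun m _ => nodup_cycleBlock σ m, ?_⟩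
  refine (pairwise_cycleMinsDesc σ).imp_of_mem fun {a b} ha hb hab => ?_
  refine List.disjoint_left.2 fun x hxa hxb => hab.ne' ?_
  have hab : σ.SameCycle a b :=
    ((mem_cycleBlock σ a).1 hxa).trans ((mem_cycleBlock σ b).1 hxb).symm
  exact le_antisymm ((mem_cycleMinsDesc σ).1 ha b hab) ((mem_cycleMinsDesc σ).1 hb a hab.symm)

theorem length_foataWord : (foataWord σ).length = n := by
  simpa using Fintype.card_congr
    ((nodup_foataWord σ).getEquivOfForallMemList _ (mem_foataWord σ))

theorem foataWord_injective : Function.Injective (foataWord (n := n)) := by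
  intro σ τ h
  have hblocks (σ : Equiv.Perm (Fin n)) :
      ∀ m ∈ cycleMinsDesc σ, (cycleBlock σ m).head? = some m ∧ ∀ x ∈ cycleBlock σ m, m ≤ x :=
    fun m hm => ⟨head?_cycleBlock σ m,
      fun x hx => (mem_cycleMinsDesc σ).1 hm x ((mem_cycleBlock σ m).1 hx)⟩
  obtain ⟨-, hblock⟩ := List.eq_of_flatMap_eq_of_head_min (hblocks σ) (hblocks τ)
    (pairwise_cycleMinsDesc σ) (pairwise_cycleMinsDesc τ) h
  ext x
  obtain ⟨m, hm, hmx⟩ := exists_mem_cycleMinsDesc_sameCycle σ x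
  rw [apply_eq_of_cycleBlock_eq (hblock m hm) hmx]

noncomputable def foataPerm : Equiv.Perm (Fin n) :=
  (finCongr (length_foataWord σ)).symm.trans
    ((nodup_foataWord σ).getEquivOfForallMemList _ (mem_foataWord σ))

theorem map_finRange_foataPerm : (List.finRange n).map (foataPerm σ) = foataWord σ :=
  List.ext_getElem (by simp [length_foataWord]) fun i _ _ => by simp [foataPerm]

theorem foataPerm_injective : Function.Injective (foataPerm (n := n)) := fun σ τ h =>
  foataWord_injective <| by rw [← map_finRange_foataPerm, h, map_finRange_foataPerm]

end FoataWord

/-- Foata's map is an injective, hence bijective, map from `S_n` to `S_n`: the word obtained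
from the canonical cycle notation is the one-line notation of a permutation, and the
resulting map is a bijection of the symmetric group. -/
theorem stmt1 (n : ℕ) :
    Function.Injective (foataWord (n := n)) ∧
    ∃ f : Equiv.Perm (Fin n) ≃ Equiv.Perm (Fin n),
      ∀ σ, (List.finRange n).map (f σ) = foataWord σ :=
  ⟨foataWord_injective, Equiv.ofBijective _ (Finite.injective_iff_bijective.1 foataPerm_injective),
    map_finRange_foataPerm⟩
end

section
/- Among all compositions (n_1, ..., n_k) of n into k positive parts, the product ∏_{i=1}^k n_i! is minimized when the parts are as equal as possible: n_i = ⌊n/k⌋ + 1 for i ≤ n mod k and n_i = ⌊n/k⌋ otherwise. -/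
open Finset Nat

private lemma prod_pair' {M : Type*} [CommMonoid M] {k : ℕ} (i j : Fin k) (hij : i ≠ j)
    (u : Fin k → M) :
    ∏ x, u x = u i * u j * ∏ x ∈ (univ.erase j).erase i, u x := by
  rw [← Finset.mul_prod_erase univ u (mem_univ j),
      ← Finset.mul_prod_erase (univ.erase j) u
        (Finset.mem_erase.mpr ⟨hij, mem_univ i⟩)]
  rw [← mul_assoc, mul_comm (u j) (u i)]

private lemma sum_pair' {k : ℕ} (i j : Fin k) (hij : i ≠ j) (u : Fin k → ℕ) :
    ∑ x, u x = u i + u j + ∑ x ∈ (univ.erase j).erase i, u x := by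
  rw [← Finset.add_sum_erase univ u (mem_univ j),
      ← Finset.add_sum_erase (univ.erase j) u
        (Finset.mem_erase.mpr ⟨hij, mem_univ i⟩)]
  ring

private lemma indicator_sum (k r : ℕ) (hrk : r ≤ k) :
    (∑ i : Fin k, if (i : ℕ) < r then 1 else 0) = r := by
  rw [Fin.sum_univ_eq_sum_range (fun x => if x < r then 1 else 0) k]
  rw [Finset.sum_boole]
  have : Finset.filter (fun x => x < r) (Finset.range k) = Finset.range r := by
    ext x; simp; omega
  simp [this]

private lemma key (k n : ℕ) (hk : 1 ≤ k) :
    ∀ N (f : Fin k → ℕ), (∑ i, (f i)^2 ≤ N) → (∑ i, f i = n) →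
      (∏ i : Fin k, (n / k + if (i : ℕ) < n % k then 1 else 0)!) ≤ ∏ i, (f i)! := by
  intro N
  induction N using Nat.strong_induction_on with
  | _ N ih =>
    intro f hpot hsum
    by_cases hcase : ∃ i j, f j + 2 ≤ f i
    · obtain ⟨i, j, hij2⟩ := hcase
      have hij : i ≠ j := by rintro rfl; omega
      set g : Fin k → ℕ := fun x => if x = i then f i - 1 else if x = j then f j + 1 else f x
        with hg
      have hgi : g i = f i - 1 := by simp [hg]
      have hgj : g j = f j + 1 := by simp [hg, hij.symm]
      have hgoff : ∀ x, x ∈ (univ.erase j).erase i → g x = f x := by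
        intro x hx
        simp only [mem_erase] at hx
        simp [hg, hx.1, hx.2.1]
      have hrest : ∑ x ∈ (univ.erase j).erase i, g x = ∑ x ∈ (univ.erase j).erase i, f x :=
        Finset.sum_congr rfl hgoff
      have hsumf := sum_pair' i j hij f
      have hsumg : ∑ x, g x = n := by
        rw [sum_pair' i j hij g, hgi, hgj, hrest]
        rw [hsumf] at hsum
        omega
      have hpotg : ∑ x, (g x)^2 < N := by
        calc ∑ x, (g x)^2 < ∑ x, (f x)^2 := by
              rw [sum_pair' i j hij (fun x => (g x)^2), sum_pair' i j hij (fun x => (f x)^2)]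
              have : ∑ x ∈ (univ.erase j).erase i, (g x)^2
                  = ∑ x ∈ (univ.erase j).erase i, (f x)^2 :=
                Finset.sum_congr rfl (fun x hx => by rw [hgoff x hx])
              rw [this]
              have hgi' : g i = f i - 1 := hgi
              have hgj' : g j = f j + 1 := hgj
              obtain ⟨c, hc⟩ : ∃ c, f i = f j + 2 + c := ⟨f i - (f j + 2), by omega⟩
              have : g i = f j + 1 + c := by omega
              rw [this, hgj', hc]
              have : ∀ d, d + ∑ x ∈ (univ.erase j).erase i, (f x)^2
                  = d + ∑ x ∈ (univ.erase j).erase i, (f x)^2 := fun _ => rfl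
              gcongr ?_ + _
              nlinarith [sq_nonneg c]
          _ ≤ N := hpot
      have hprodg : ∏ x, (g x)! ≤ ∏ x, (f x)! := by
        rw [prod_pair' i j hij (fun x => (g x)!), prod_pair' i j hij (fun x => (f x)!)]
        have heq : ∏ x ∈ (univ.erase j).erase i, (g x)!
            = ∏ x ∈ (univ.erase j).erase i, (f x)! :=
          Finset.prod_congr rfl (fun x hx => by rw [hgoff x hx])
        rw [heq]
        gcongr ?_ * _
        rw [hgi, hgj]
        obtain ⟨p, hp⟩ : ∃ p, f i = p + 1 := ⟨f i - 1, by omega⟩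
        have hp1 : f i - 1 = p := by omega
        rw [hp1, hp, Nat.factorial_succ, Nat.factorial_succ]
        calc p ! * ((f j + 1) * (f j)!) = (f j + 1) * (p ! * (f j)!) := by ring
          _ ≤ (p + 1) * (p ! * (f j)!) := Nat.mul_le_mul_right _ (by omega)
          _ = (p + 1) * p ! * (f j)! := by ring
      exact le_trans (ih _ hpotg g le_rfl hsumg) hprodg
    · -- all values within 1 of each other
      push_neg at hcase
      have hne : (univ : Finset (Fin k)).Nonempty := by
        have : Nonempty (Fin k) := ⟨⟨0, hk⟩⟩
        exact Finset.univ_nonempty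
      obtain ⟨i0, _, hmin⟩ := Finset.exists_min_image univ f hne
      set a := f i0 with ha
      have hfi : ∀ i, f i = a ∨ f i = a + 1 := by
        intro i
        have h1 := hmin i (mem_univ i)
        have h2 := hcase i i0
        omega
      set c := (univ.filter fun i : Fin k => f i = a + 1).card with hc
      have hck : c ≤ k := by
        calc c ≤ (univ : Finset (Fin k)).card := Finset.card_filter_le _ _
          _ = k := by simp
      have hsum' : n = k * a + c := by
        rw [← hsum]
        have : ∀ i : Fin k, f i = a + (if f i = a + 1 then 1 else 0) := by
          intro i; rcases hfi i with h | h <;> simp [h]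
        rw [Finset.sum_congr rfl (fun i _ => this i), Finset.sum_add_distrib,
          Finset.sum_const, Finset.sum_boole]
        simp [hc, mul_comm]
      have hprodf : ∏ i, (f i)! = (a+1)! ^ c * (a)! ^ (k - c) := by
        have : ∀ i : Fin k, (f i)! = if f i = a + 1 then (a+1)! else (a)! := by
          intro i; rcases hfi i with h | h <;> simp [h]
        rw [Finset.prod_congr rfl (fun i _ => this i), Finset.prod_ite,
          Finset.prod_const, Finset.prod_const]
        have hcard2 : #(filter (fun x => ¬ f x = a + 1) univ) = k - c := by
          rw [Finset.filter_not, Finset.card_sdiff_of_subset (Finset.filter_subset _ _)]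
          simp [hc]
        rw [hcard2, hc]
      -- balanced side
      set m := n / k with hm
      set r := n % k with hr
      have hrk : r < k := Nat.mod_lt _ hk
      have hnmr : n = k * m + r := by rw [hm, hr]; exact (Nat.div_add_mod n k).symm
      have hprodb : (∏ i : Fin k, (m + if (i : ℕ) < r then 1 else 0)!)
          = (m+1)! ^ r * (m)! ^ (k - r) := by
        have : ∀ i : Fin k, (m + if (i : ℕ) < r then 1 else 0)!
            = if (i : ℕ) < r then (m+1)! else (m)! := by
          intro i; by_cases h : (i : ℕ) < r <;> simp [h]
        rw [Finset.prod_congr rfl (fun i _ => this i), Finset.prod_ite,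
          Finset.prod_const, Finset.prod_const]
        have hcard : (univ.filter fun i : Fin k => (i : ℕ) < r).card = r := by
          have := indicator_sum k r (le_of_lt hrk)
          rwa [Finset.sum_boole, Nat.cast_id] at this
        congr 1
        · rw [hcard]
        · congr 1
          rw [Finset.filter_not, Finset.card_sdiff_of_subset (Finset.filter_subset _ _)]
          simp [hcard]
      rw [hprodf, hprodb]
      rcases eq_or_lt_of_le hck with hceq | hclt
      · -- c = k, so n = k*(a+1), m = a+1, r = 0
        have hmval : m = a + 1 := by
          rw [hm, hsum', hceq, ← Nat.mul_succ, Nat.mul_div_cancel_left _ hk]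
        have hrval : r = 0 := by
          rw [hr, hsum', hceq, ← Nat.mul_succ, Nat.mul_mod_right]
        rw [hmval, hrval, hceq]
        simp
      · -- c < k, so m = a, r = c
        have hmval : m = a := by
          rw [hm, hsum', Nat.mul_add_div hk, Nat.div_eq_of_lt hclt, add_zero]
        have hrval : r = c := by
          rw [hr, hsum', Nat.mul_add_mod, Nat.mod_eq_of_lt hclt]
        rw [hmval, hrval]

open Finset Nat in
/-- Among all compositions `(n_1, …, n_k)` of `n` into `k` positive parts, `∏_i n_i!` is
minimized when the parts are as equal as possible: `n_i = ⌊n/k⌋ + 1` for the first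
`n mod k` parts and `n_i = ⌊n/k⌋` otherwise. -/
theorem stmt6 (n k : ℕ) (hk : 1 ≤ k) (hkn : k ≤ n) (f : Fin k → ℕ) (hf : ∀ i, 1 ≤ f i)
    (hsum : ∑ i, f i = n) :
    (∀ i, 1 ≤ (fun j : Fin k => n / k + if (j : ℕ) < n % k then 1 else 0) i) ∧
    (∑ i, (fun j : Fin k => n / k + if (j : ℕ) < n % k then 1 else 0) i) = n ∧
    (∏ i, ((fun j : Fin k => n / k + if (j : ℕ) < n % k then 1 else 0) i)!) ≤ ∏ i, (f i)! := by
  have hdiv : 1 ≤ n / k := (Nat.one_le_div_iff hk).mpr hkn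
  refine ⟨fun i => by simp; omega, ?_, ?_⟩
  · simp only
    rw [Finset.sum_add_distrib, Finset.sum_const,
      indicator_sum k (n % k) (le_of_lt (Nat.mod_lt _ hk)), smul_eq_mul]
    rw [Finset.card_univ, Fintype.card_fin, mul_comm]
    exact Nat.div_add_mod' n k
  · exact key k n hk (∑ i, (f i)^2) f le_rfl hsum
end

section
/- For any partition of [n] into k equal-size blocks of size m = n/k (assuming k divides n), log|Π| = k·log((m-1)!), and this value is the minimum of log|Π| over all partitions of [n] into k blocks. -/
open Finset Nat

lemma lemA18 (m d : ℕ) (hm : 1 ≤ m) : (m-1)! * m^d ≤ (m+d-1)! := by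
  induction d with
  | zero => simp
  | succ d ih =>
    have h1 : m + (d+1) - 1 = (m + d - 1) + 1 := by omega
    rw [h1, Nat.factorial_succ]
    calc (m-1)! * m^(d+1) = ((m-1)! * m^d) * m := by ring
    _ ≤ (m+d-1)! * m := Nat.mul_le_mul_right _ ih
    _ ≤ (m+d-1)! * (m+d-1+1) := Nat.mul_le_mul_left _ (by omega)
    _ = (m+d-1+1) * (m+d-1)! := by ring

lemma lemB18 (x d : ℕ) (hx : 1 ≤ x) : (x+d-1)! ≤ (x-1)! * (x+d)^d := by
  induction d with
  | zero => simp
  | succ d ih =>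
    have h1 : x + (d+1) - 1 = (x + d - 1) + 1 := by omega
    have h2 : x + d - 1 + 1 = x + d := by omega
    rw [h1, Nat.factorial_succ, h2]
    calc (x+d) * (x+d-1)! ≤ (x+d) * ((x-1)! * (x+d)^d) :=
        Nat.mul_le_mul_left _ ih
    _ ≤ (x+d+1) * ((x-1)! * (x+d+1)^d) := by
        exact Nat.mul_le_mul (by omega) (Nat.mul_le_mul_left _
          (Nat.pow_le_pow_left (by omega) d))
    _ = (x-1)! * (x+(d+1))^(d+1) := by ring_nf

lemma key18 (m x : ℕ) (hm : 1 ≤ m) (hx : 1 ≤ x) :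
    Real.log ((m-1)!) + ((x:ℝ) - m) * Real.log m ≤ Real.log ((x-1)!) := by
  rcases le_total m x with h | h
  · obtain ⟨d, rfl⟩ := Nat.exists_eq_add_of_le h
    have hn := lemA18 m d hm
    have hlog : Real.log (((m-1)! * m^d : ℕ) : ℝ) ≤ Real.log (((m+d-1)! : ℕ) : ℝ) := by
      apply Real.log_le_log (by positivity) (by exact_mod_cast hn)
    rw [Nat.cast_mul, Nat.cast_pow, Real.log_mul (by positivity) (by positivity),
      Real.log_pow] at hlog
    have : ((m:ℝ) + d) - m = d := by ring
    rw [Nat.cast_add, this]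
    linarith
  · obtain ⟨d, rfl⟩ := Nat.exists_eq_add_of_le h
    have hn := lemB18 x d hx
    have hlog : Real.log (((x+d-1)! : ℕ) : ℝ) ≤ Real.log (((x-1)! * (x+d)^d : ℕ) : ℝ) := by
      apply Real.log_le_log (by positivity) (by exact_mod_cast hn)
    rw [Nat.cast_mul, Nat.cast_pow, Real.log_mul (by positivity) (by positivity),
      Real.log_pow] at hlog
    push_cast at hlog
    have : (x:ℝ) - ((x:ℝ) + d) = -d := by ring
    rw [Nat.cast_add, this]
    linarith

open Finset Nat in
/-- If `k ∣ n` and `m = n / k`, then for the partition of `[n]` into `k` equal blocks of size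
`m`, `log|Π| = ∑_i log((m-1)!) = k · log((m-1)!)`, and this is the minimum of
`log|Π| = ∑_i log((n_i - 1)!)` over all partitions of `[n]` into `k` blocks. -/
theorem stmt18 (n k m : ℕ) (hk : 1 ≤ k) (hkn : k ∣ n) (hm : m = n / k)
    (f : Fin k → ℕ) (hf : ∀ i, 1 ≤ f i) (hsum : ∑ i, f i = n) :
    (∑ _i : Fin k, Real.log ((m - 1)!)) = k * Real.log ((m - 1)!) ∧
    (k : ℝ) * Real.log ((m - 1)!) ≤ ∑ i, Real.log ((f i - 1)!) := by
  constructor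
  · simp [mul_comm]
  · have hn : n = k * m := by
      rw [hm]; exact (Nat.mul_div_cancel' hkn).symm
    have hnk : k ≤ n := by
      calc k = ∑ _i : Fin k, 1 := by simp
      _ ≤ ∑ i, f i := Finset.sum_le_sum (fun i _ => hf i)
      _ = n := hsum
    have hm1 : 1 ≤ m := by
      rcases Nat.eq_zero_or_pos m with h0 | h
      · subst h0; simp at hn; omega
      · exact h
    have hkey : ∀ i : Fin k,
        Real.log ((m-1)!) + ((f i : ℝ) - m) * Real.log m ≤ Real.log ((f i - 1)!) :=
      fun i => key18 m (f i) hm1 (hf i)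
    have hsum' : ∑ i, (Real.log ((m-1)!) + ((f i : ℝ) - m) * Real.log m)
        ≤ ∑ i, Real.log ((f i - 1)!) := Finset.sum_le_sum (fun i _ => hkey i)
    have hcast : (∑ i, ((f i : ℝ))) = (n : ℝ) := by exact_mod_cast hsum
    have hexp : ∑ i, (Real.log ((m-1)!) + ((f i : ℝ) - m) * Real.log m)
        = k * Real.log ((m-1)!) + ((n : ℝ) - k * m) * Real.log m := by
      rw [Finset.sum_add_distrib]
      simp only [Finset.sum_const, Finset.card_univ, Fintype.card_fin, nsmul_eq_mul]
      rw [← Finset.sum_mul, Finset.sum_sub_distrib, hcast]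
      simp [mul_comm]
    rw [hexp] at hsum'
    have : ((n:ℝ) - k * m) = 0 := by
      have : (n:ℝ) = k * m := by exact_mod_cast hn
      linarith
    rw [this, zero_mul, add_zero] at hsum'
    exact hsum'
end
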